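/- Let Γ₅ be the graph on vertices {a, b, c, d, e, f} with edges {a,d}, {b,e}, {c,f}, {d,e}, {e,f}, {d,f}, and let G be any game over Γ₅. If G ⊨ {a} ▷ {b}, G ⊨ {b} ▷ {c}, and G ⊨ {c} ▷ {a}, then G ⊨ {d,e,f} ▷ {a,b,c}. -/
import Mathlib


/-- A strategic game over a dependency graph `Γ`: each player (vertex) `v` has a
finite nonempty strategy set, and the payoff of `v` depends only on the
strategies of players in `Adj⁺(v) = {v} ∪ {w : Γ.Adj v w}`. -/
structure GameOn {V : Type} (Γ : SimpleGraph V) where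
  S : V → Type
  instFin : ∀ v, Fintype (S v)
  instNonempty : ∀ v, Nonempty (S v)
  u : (v : V) → ((w : V) → S w) → ℝ
  u_local : ∀ (v : V) (s t : (w : V) → S w),
    (∀ w, (w = v ∨ Γ.Adj v w) → s w = t w) → u v s = u v t

/-- Nash equilibrium: no player can strictly increase his payoff by a
unilateral deviation. -/
def GameOn.NE {V : Type} [DecidableEq V] {Γ : SimpleGraph V} (G : GameOn Γ)
    (s : (v : V) → G.S v) : Prop :=
  ∀ (v : V) (x : G.S v), G.u v (Function.update s v x) ≤ G.u v s

/-- `G.Det A B` is the semantics of `A ▷ B`: any two Nash equilibria that agree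
on `A` also agree on `B`. -/
def GameOn.Det {V : Type} [DecidableEq V] {Γ : SimpleGraph V} (G : GameOn Γ)
    (A B : Set V) : Prop :=
  ∀ s t : (v : V) → G.S v, G.NE s → G.NE t →
    (∀ x ∈ A, s x = t x) → ∀ x ∈ B, s x = t x

/-- The border of a set of vertices `U`: vertices of `U` adjacent to some vertex outside `U`. -/
def border {V : Type} (Γ : SimpleGraph V) (U : Set V) : Set V :=
  {v | v ∈ U ∧ ∃ w, w ∉ U ∧ Γ.Adj v w}

/-- The graph `Γ₅` on vertices `a = 0`, `b = 1`, `c = 2`, `d = 3`, `e = 4`,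
`f = 5` with edges `{a,d}`, `{b,e}`, `{c,f}`, `{d,e}`, `{e,f}`, `{d,f}`. -/
def Gamma5 : SimpleGraph (Fin 6) :=
  SimpleGraph.fromRel (fun x y =>
    (x, y) ∈ ([(0, 3), (1, 4), (2, 5), (3, 4), (4, 5), (3, 5)] :
      List (Fin 6 × Fin 6)))

instance : DecidableRel Gamma5.Adj := fun x y =>
  decidable_of_iff _ (SimpleGraph.fromRel_adj _ x y).symm

/-- If `r` agrees with some Nash equilibrium on the closed neighborhood of
every vertex, then `r` is a Nash equilibrium. -/
lemma NE_of_local {V : Type} [DecidableEq V] {Γ : SimpleGraph V} (G : GameOn Γ)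
    (r : (v : V) → G.S v)
    (h : ∀ v, ∃ p : (w : V) → G.S w, G.NE p ∧
      ∀ w, (w = v ∨ Γ.Adj v w) → r w = p w) :
    G.NE r := by
  intro v x
  obtain ⟨p, hp, hagree⟩ := h v
  have h1 : G.u v (Function.update r v x) = G.u v (Function.update p v x) := by
    apply G.u_local
    intro w hw
    by_cases hwv : w = v
    · subst hwv; simp
    · rw [Function.update_of_ne hwv, Function.update_of_ne hwv]
      exact hagree w hw
  have h2 : G.u v r = G.u v p := G.u_local v r p hagree
  rw [h1, h2]; exact hp v x
/-- Proposition 4 (semantic form): for any game `G` over `Γ₅`, if `G ⊨ a ▷ b`,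
`G ⊨ b ▷ c`, and `G ⊨ c ▷ a`, then `G ⊨ d,e,f ▷ a,b,c`
(with `a,…,f = 0,…,5`). -/
theorem prop4_semantic (G : GameOn Gamma5)
    (h₁ : G.Det {0} {1}) (h₂ : G.Det {1} {2}) (h₃ : G.Det {2} {0}) :
    G.Det {3, 4, 5} {0, 1, 2} := by
  intro s t hs ht hst
  have e3 : s 3 = t 3 := hst 3 (by simp)
  have e4 : s 4 = t 4 := hst 4 (by simp)
  have e5 : s 5 = t 5 := hst 5 (by simp)
  -- hybrid taking s at i, t elsewhere
  have key : ∀ i : Fin 6, i = 0 ∨ i = 1 ∨ i = 2 →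
      G.NE (fun v => if v = i then s v else t v) := by
    intro i hi
    apply NE_of_local
    intro v
    by_cases hvi : v = i ∨ Gamma5.Adj i v
    · refine ⟨s, hs, fun w hw => ?_⟩
      rcases hi with rfl | rfl | rfl <;> fin_cases v <;> fin_cases w <;>
        first
          | exact absurd hvi (by decide)
          | exact absurd hw (by decide)
          | simp_all
    · refine ⟨t, ht, fun w hw => ?_⟩
      have hwi : w ≠ i := by
        rintro rfl
        rcases hw with rfl | hw
        · exact hvi (Or.inl rfl)
        · exact hvi (Or.inr hw.symm)
      simp [hwi]
  have k0 := key 0 (Or.inl rfl)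
  have k1 := key 1 (Or.inr (Or.inl rfl))
  have k2 := key 2 (Or.inr (Or.inr rfl))
  have eq1 : t 1 = s 1 := by
    have := h₁ (fun v => if v = (0:Fin 6) then s v else t v) s k0 hs
      (by intro x hx; simp at hx; subst hx; simp) 1 (by simp)
    simpa using this
  have eq2 : t 2 = s 2 := by
    have := h₂ (fun v => if v = (1:Fin 6) then s v else t v) s k1 hs
      (by intro x hx; simp at hx; subst hx; simp) 2 (by simp)
    simpa using this
  have eq0 : t 0 = s 0 := by
    have := h₃ (fun v => if v = (2:Fin 6) then s v else t v) s k2 hs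
      (by intro x hx; simp at hx; subst hx; simp) 0 (by simp)
    simpa using this
  intro x hx
  rcases hx with rfl | rfl | rfl
  · exact eq0.symm
  · exact eq1.symm
  · exact eq2.symm
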